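/- Let 0 ≤ α < 1, γ > 0, and h^{[1]}, …, h^{[T]} ∈ ℝ^d. Define d^{[t]} = −(γα/(1−α)) ∑_{τ=1}^t α^{t−τ} h^{[τ]}. Then ∑_{t=1}^T ‖d^{[t]}‖² ≤ (γ² α²/(1−α)^4) ∑_{t=1}^T ‖h^{[t]}‖². -/

import Mathlib

/-!
The momentum `d` is, up to the factor `-γα/(1-α)`, the convolution of `h` with the geometric
kernel `α^(t-τ)`, whose row and column sums are both at most `1/(1-α)`. Weighting Cauchy–Schwarz
by the kernel (Jensen) bounds each `‖d t‖²` by a row sum times a kernel-weighted sum of `‖h τ‖²`;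
summing over `t` and exchanging the order of summation costs a column sum.
-/

open Finset

lemma sum_pow_le_inv_one_sub_of_injOn {ι : Type*} {α : ℝ} (hα0 : 0 ≤ α) (hα1 : α < 1)
    (s : Finset ι) {f : ι → ℕ} (hf : Set.InjOn f s) :
    ∑ i ∈ s, α ^ f i ≤ (1 - α)⁻¹ := by
  rw [← sum_image hf]
  exact (summable_geometric_of_lt_one hα0 hα1).sum_le_tsum _ (fun _ _ ↦ pow_nonneg hα0 _)
    |>.trans_eq (tsum_geometric_of_lt_one hα0 hα1)

lemma sq_sum_mul_le_sum_mul_sum_mul_sq {ι : Type*} (s : Finset ι) {w : ι → ℝ}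
    (hw : ∀ i ∈ s, 0 ≤ w i) (a : ι → ℝ) :
    (∑ i ∈ s, w i * a i) ^ 2 ≤ (∑ i ∈ s, w i) * ∑ i ∈ s, w i * a i ^ 2 :=
  sum_sq_le_sum_mul_sum_of_sq_le_mul s hw (fun i hi ↦ mul_nonneg (hw i hi) (sq_nonneg _))
    (fun i _ ↦ (by ring : (w i * a i) ^ 2 = w i * (w i * a i ^ 2)).le)

lemma sum_sq_geom_conv_le {α : ℝ} (hα0 : 0 ≤ α) (hα1 : α < 1) (a : ℕ → ℝ) (T : ℕ) :
    ∑ t ∈ Icc 1 T, (∑ τ ∈ Icc 1 t, α ^ (t - τ) * a τ) ^ 2 ≤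
      ((1 - α)⁻¹) ^ 2 * ∑ t ∈ Icc 1 T, a t ^ 2 := by
  have hC : 0 ≤ (1 - α)⁻¹ := inv_nonneg.2 (by linarith)
  have row_le (t : ℕ) : ∑ τ ∈ Icc 1 t, α ^ (t - τ) ≤ (1 - α)⁻¹ :=
    sum_pow_le_inv_one_sub_of_injOn hα0 hα1 _ fun x hx y hy hxy ↦ by
      simp only [coe_Icc, Set.mem_Icc] at hx hy; omega
  have col_le (τ : ℕ) : ∑ t ∈ Icc τ T, α ^ (t - τ) ≤ (1 - α)⁻¹ :=
    sum_pow_le_inv_one_sub_of_injOn hα0 hα1 _ fun x hx y hy hxy ↦ by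
      simp only [coe_Icc, Set.mem_Icc] at hx hy; omega
  have swap : ∑ t ∈ Icc 1 T, ∑ τ ∈ Icc 1 t, α ^ (t - τ) * a τ ^ 2 =
      ∑ τ ∈ Icc 1 T, (∑ t ∈ Icc τ T, α ^ (t - τ)) * a τ ^ 2 := by
    simp_rw [sum_mul]
    exact sum_comm' fun t τ ↦ by simp only [mem_Icc]; omega
  calc ∑ t ∈ Icc 1 T, (∑ τ ∈ Icc 1 t, α ^ (t - τ) * a τ) ^ 2
      ≤ ∑ t ∈ Icc 1 T, (1 - α)⁻¹ * ∑ τ ∈ Icc 1 t, α ^ (t - τ) * a τ ^ 2 := by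
        gcongr with t
        refine (sq_sum_mul_le_sum_mul_sum_mul_sq _ (fun _ _ ↦ pow_nonneg hα0 _) a).trans ?_
        gcongr
        exact row_le t
    _ = (1 - α)⁻¹ * ∑ τ ∈ Icc 1 T, (∑ t ∈ Icc τ T, α ^ (t - τ)) * a τ ^ 2 := by
        rw [← mul_sum, swap]
    _ ≤ (1 - α)⁻¹ * ∑ τ ∈ Icc 1 T, (1 - α)⁻¹ * a τ ^ 2 := by
        gcongr with τ
        exact col_le τ
    _ = ((1 - α)⁻¹) ^ 2 * ∑ t ∈ Icc 1 T, a t ^ 2 := by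
        rw [← mul_sum]; ring

theorem momentum_deviation_bound_general {dim : ℕ} (α γ : ℝ)
    (hα0 : 0 ≤ α) (hα1 : α < 1) (T : ℕ)
    (h d : ℕ → EuclideanSpace ℝ (Fin dim))
    (hd : ∀ t, d t = (-(γ * α / (1 - α))) •
        ∑ τ ∈ Finset.Icc 1 t, α ^ (t - τ) • h τ) :
    ∑ t ∈ Finset.Icc 1 T, ‖d t‖^2 ≤
      (γ^2 * α^2 / (1 - α)^4) * ∑ t ∈ Finset.Icc 1 T, ‖h t‖^2 := by
  set c := γ * α / (1 - α)
  have norm_d_le (t : ℕ) : ‖d t‖ ≤ |c| * ∑ τ ∈ Icc 1 t, α ^ (t - τ) * ‖h τ‖ := by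
    rw [hd t, norm_smul, norm_neg, Real.norm_eq_abs]
    gcongr
    refine (norm_sum_le _ _).trans_eq (sum_congr rfl fun τ _ ↦ ?_)
    rw [norm_smul, Real.norm_of_nonneg (pow_nonneg hα0 _)]
  calc ∑ t ∈ Icc 1 T, ‖d t‖ ^ 2
      ≤ ∑ t ∈ Icc 1 T, c ^ 2 * (∑ τ ∈ Icc 1 t, α ^ (t - τ) * ‖h τ‖) ^ 2 := by
        gcongr with t
        rw [← sq_abs c, ← mul_pow]
        exact pow_le_pow_left₀ (norm_nonneg _) (norm_d_le t) 2
    _ ≤ c ^ 2 * (((1 - α)⁻¹) ^ 2 * ∑ t ∈ Icc 1 T, ‖h t‖ ^ 2) := by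
        rw [← mul_sum]
        gcongr
        exact sum_sq_geom_conv_le hα0 hα1 _ T
    _ = (γ ^ 2 * α ^ 2 / (1 - α) ^ 4) * ∑ t ∈ Icc 1 T, ‖h t‖ ^ 2 := by
        simp only [c]; field_simp

theorem momentum_deviation_bound {dim : ℕ} (α γ : ℝ)
    (hα0 : 0 ≤ α) (hα1 : α < 1) (hγ : 0 < γ) (T : ℕ)
    (h d : ℕ → EuclideanSpace ℝ (Fin dim))
    (hd : ∀ t, d t = (-(γ * α / (1 - α))) •
        ∑ τ ∈ Finset.Icc 1 t, α ^ (t - τ) • h τ) :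
    ∑ t ∈ Finset.Icc 1 T, ‖d t‖^2 ≤
      (γ^2 * α^2 / (1 - α)^4) * ∑ t ∈ Finset.Icc 1 T, ‖h t‖^2 :=
  momentum_deviation_bound_general α γ hα0 hα1 T h d hd
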